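/- (Van der Corput lemma for sequences.) Let G be a second countable topological group with right-invariant Borel measure μ, and {Λₙ} a uniformly space-filling sequence in a Borel subsemigroup K of G. Let f : G → 𝔥 be bounded into a Hilbert space 𝔥, with ⟨f(·), x⟩ Borel for each x ∈ 𝔥 and (g,h) ↦ ⟨f(g), f(h)⟩ Borel on G². Assume γ_h := lim_{n→∞} (1/μ(Λₙ)) ∫_{Λₙ} ⟨f(g), f(gh)⟩ dg exists for all h ∈ G, and that lim_{m→∞} (1/μ(Λₘ)²) ∫_{Λₘ} ∫_{Λₘ} γ_{h₁⁻¹ h₂} dh₁ dh₂ = 0. Then lim_{n→∞} (1/μ(Λₙ)) ∫_{Λₙ} f dμ = 0 in the norm of 𝔥. -/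

import Mathlib

/-!
Averages over `Λₙ` are written as integrals against the conditional measure `μ[|Λₙ]`, which is
the zero measure exactly when `(μ Λₙ).toReal⁻¹ = 0`.

Fix `m` with `μ Λₘ ≠ 0`. Replacing `f` by its right averages `g ↦ ⨍_{h ∈ Λₘ} f (g h)` changes the
average over `Λₙ` by at most `C · sup_{h ∈ Λₘ} μ(Λₙ ∆ Λₙ h) / μ Λₙ`, which tends to `0`. For the
new average, Jensen's inequality in `H` and expanding the square bound its squared norm by the
average over `(h₁, h₂) ∈ Λₘ²` of the correlations `⨍_{g ∈ Λₙ} ⟪f (g h₁), f (g h₂)⟫`. These tend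
to `γ (h₁⁻¹ h₂)` since `Λₙ` is almost invariant under `h₁`, so by dominated convergence the bound
tends to the double average of `γ` over `Λₘ`, which is small for suitable `m`.
-/

open MeasureTheory Filter ProbabilityTheory
open scoped ENNReal RealInnerProductSpace Topology

theorem norm_inner_le_of_forall_norm_le {X H : Type*} [NormedAddCommGroup H]
    [InnerProductSpace ℝ H] {F : X → H} {C : ℝ} (hC : ∀ x, ‖F x‖ ≤ C) (a b : X) :
    ‖⟪F a, F b⟫‖ ≤ C * C :=
  (norm_inner_le_norm _ _).trans
    (mul_le_mul (hC a) (hC b) (norm_nonneg _) ((norm_nonneg _).trans (hC a)))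

section Integral

variable {X Y E H : Type*} [MeasurableSpace X] [MeasurableSpace Y]
  [NormedAddCommGroup E] [NormedSpace ℝ E]
  [NormedAddCommGroup H] [InnerProductSpace ℝ H] [CompleteSpace H]

theorem integral_cond (μ : Measure X) (s : Set X) (φ : X → E) :
    ∫ x, φ x ∂μ[|s] = (μ.real s)⁻¹ • ∫ x in s, φ x ∂μ := by
  rw [ProbabilityTheory.cond, integral_smul_measure, ENNReal.toReal_inv, measureReal_def]

theorem norm_setIntegral_sub_setIntegral_le {μ : Measure X} {s t : Set X}
    (hs : MeasurableSet s) (ht : MeasurableSet t) (hμs : μ s ≠ ∞) (hμt : μ t ≠ ∞)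
    {φ : X → E} (hφ : AEStronglyMeasurable φ μ) {C : ℝ} (hC : ∀ x, ‖φ x‖ ≤ C) :
    ‖∫ x in s, φ x ∂μ - ∫ x in t, φ x ∂μ‖ ≤ C * μ.real (symmDiff s t) := by
  have hint : ∀ u, MeasurableSet u → μ u ≠ ∞ → Integrable (u.indicator φ) μ := fun u hu hμu =>
    have : IsFiniteMeasure (μ.restrict u) := isFiniteMeasure_restrict.2 hμu
    (integrable_indicator_iff hu).2 (Integrable.of_bound hφ.restrict C (ae_of_all _ hC))
  have hpt : ∀ x,
      ‖s.indicator φ x - t.indicator φ x‖ ≤ (symmDiff s t).indicator (fun _ => C) x := by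
    intro x
    by_cases hxs : x ∈ s <;> by_cases hxt : x ∈ t <;>
      simp [Set.indicator, Set.mem_symmDiff, hxs, hxt, hC x]
  rw [← integral_indicator hs, ← integral_indicator ht,
    ← integral_sub (hint s hs hμs) (hint t ht hμt), mul_comm, ← smul_eq_mul,
    ← integral_indicator_const C (hs.symmDiff ht)]
  exact norm_integral_le_of_norm_le ((integrable_indicator_iff (hs.symmDiff ht)).2
    (integrableOn_const (measure_symmDiff_ne_top hμs hμt)))
    (ae_of_all _ hpt)

theorem norm_sub_integral_le [CompleteSpace E] (P : Measure X) [IsProbabilityMeasure P] {F : X → E}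
    (hF : Integrable F P) (x : E) {B : ℝ} (hB : ∀ᵐ y ∂P, ‖x - F y‖ ≤ B) :
    ‖x - ∫ y, F y ∂P‖ ≤ B := by
  have h := norm_integral_le_of_norm_le_const hB
  rwa [integral_sub (integrable_const x) hF, integral_const, probReal_univ, one_smul, mul_one] at h

theorem norm_integral_le_of_forall_norm_le (P : Measure X) [IsZeroOrProbabilityMeasure P]
    {φ : X → E} {C : ℝ} (hC0 : 0 ≤ C) (hC : ∀ x, ‖φ x‖ ≤ C) : ‖∫ x, φ x ∂P‖ ≤ C :=
  (norm_integral_le_of_norm_le_const (ae_of_all _ hC)).trans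
    (mul_le_of_le_one_right hC0 measureReal_le_one)

theorem sq_norm_integral_le_integral_sq_norm [CompleteSpace E] (P : Measure X)
    [IsZeroOrProbabilityMeasure P]
    {ψ : X → E} (hψ : Integrable ψ P) (hψ2 : Integrable (fun x => ‖ψ x‖ ^ 2) P) :
    ‖∫ x, ψ x ∂P‖ ^ 2 ≤ ∫ x, ‖ψ x‖ ^ 2 ∂P := by
  rcases eq_zero_or_isProbabilityMeasure P with rfl | _
  · simp
  · exact (convexOn_univ_norm.pow (fun _ _ => norm_nonneg _) 2).map_integral_le
      (continuous_norm.pow 2).continuousOn isClosed_univ (ae_of_all _ fun _ => trivial) hψ hψ2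

theorem sq_norm_integral_eq_integral_inner (P : Measure X) [IsFiniteMeasure P] {F : X → H}
    (hF : Integrable F P) :
    ‖∫ x, F x ∂P‖ ^ 2 = ∫ p, ⟪F p.1, F p.2⟫ ∂P.prod P := by
  have hint : Integrable (fun p : X × X => ⟪F p.1, F p.2⟫) (P.prod P) :=
    (hF.norm.mul_prod hF.norm).mono' (hF.1.comp_fst.inner hF.1.comp_snd)
      (ae_of_all _ fun p => abs_real_inner_le_norm _ _)
  rw [integral_prod _ hint, ← real_inner_self_eq_norm_sq, ← integral_inner hF]
  refine integral_congr_ae (ae_of_all _ fun x => ?_)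
  dsimp only
  rw [real_inner_comm, ← integral_inner hF]

theorem sq_norm_integral_integral_le (ν : Measure Y) [IsZeroOrProbabilityMeasure ν]
    (P : Measure X) [IsFiniteMeasure P] {F : Y → X → H}
    (hF : StronglyMeasurable (Function.uncurry F)) {C : ℝ} (hC : ∀ y x, ‖F y x‖ ≤ C) :
    ‖∫ x, ∫ y, F y x ∂ν ∂P‖ ^ 2 ≤ ∫ p, ∫ y, ⟪F y p.1, F y p.2⟫ ∂ν ∂P.prod P := by
  have hFy : ∀ y, Integrable (F y) P := fun y =>
    .of_bound (hF.comp_measurable measurable_prodMk_left).aestronglyMeasurable C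
      (ae_of_all _ (hC y))
  have hT : StronglyMeasurable fun y => ∫ x, F y x ∂P := hF.integral_prod_right'
  have hTb : ∀ y, ‖∫ x, F y x ∂P‖ ≤ C * P.real Set.univ := fun y =>
    norm_integral_le_of_norm_le_const (ae_of_all _ (hC y))
  have hInner : StronglyMeasurable fun q : Y × (X × X) => ⟪F q.1 q.2.1, F q.1 q.2.2⟫ :=
    (hF.comp_measurable (measurable_fst.prodMk measurable_snd.fst)).inner
      (hF.comp_measurable (measurable_fst.prodMk measurable_snd.snd))
  calc ‖∫ x, ∫ y, F y x ∂ν ∂P‖ ^ 2 = ‖∫ y, ∫ x, F y x ∂P ∂ν‖ ^ 2 := by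
        rw [integral_integral_swap
          (Integrable.of_bound hF.aestronglyMeasurable C (ae_of_all _ fun _ => hC _ _))]
    _ ≤ ∫ y, ‖∫ x, F y x ∂P‖ ^ 2 ∂ν :=
        sq_norm_integral_le_integral_sq_norm ν
          (.of_bound hT.aestronglyMeasurable _ (ae_of_all _ hTb))
          (.of_bound (hT.norm.pow 2).aestronglyMeasurable ((C * P.real Set.univ) ^ 2)
            (ae_of_all _ fun y => by
              simpa using pow_le_pow_left₀ (norm_nonneg _) (hTb y) 2))
    _ = ∫ y, ∫ p, ⟪F y p.1, F y p.2⟫ ∂P.prod P ∂ν :=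
        integral_congr_ae (ae_of_all _ fun y => sq_norm_integral_eq_integral_inner P (hFy y))
    _ = ∫ p, ∫ y, ⟪F y p.1, F y p.2⟫ ∂ν ∂P.prod P :=
        integral_integral_swap (Integrable.of_bound hInner.aestronglyMeasurable (C * C)
          (ae_of_all _ fun q => norm_inner_le_of_forall_norm_le (F := Function.uncurry F)
            (fun p => hC p.1 p.2) (q.1, q.2.1) (q.1, q.2.2)))

end Integral

section Translation

variable {G E : Type*} [Group G] [MeasurableSpace G] [MeasurableMul G]
  {μ : Measure G} [μ.IsMulRightInvariant] [NormedAddCommGroup E] [NormedSpace ℝ E]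

theorem measure_image_mul_right (s : Set G) (g : G) :
    μ ((· * g) '' s) = μ s := by
  rw [Set.image_mul_right, measure_preimage_mul_right]

theorem measureReal_image_mul_right (s : Set G) (g : G) :
    μ.real ((· * g) '' s) = μ.real s := by
  rw [measureReal_def, measure_image_mul_right, measureReal_def]

theorem measureReal_symmDiff_image_mul_right_le {s : Set G} (hμs : μ s ≠ ∞) (g : G) :
    μ.real (symmDiff s ((· * g) '' s)) ≤ 2 * μ.real s :=
  calc μ.real (symmDiff s ((· * g) '' s)) ≤ μ.real (s ∪ (· * g) '' s) :=
        measureReal_mono Set.symmDiff_subset_union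
          (measure_union_ne_top hμs (by rwa [measure_image_mul_right]))
    _ ≤ μ.real s + μ.real ((· * g) '' s) := measureReal_union_le _ _
    _ = 2 * μ.real s := by rw [measureReal_image_mul_right]; ring

theorem measureReal_symmDiff_image_mul_right_le_iSup {s t : Set G} (hμs : μ s ≠ ∞) {h : G}
    (ht : h ∈ t) :
    μ.real (symmDiff s ((· * h) '' s)) ≤ ⨆ g ∈ t, μ.real (symmDiff s ((· * g) '' s)) := by
  refine le_ciSup_of_le ⟨2 * μ.real s, ?_⟩ h
    (le_ciSup_of_le (Set.finite_range _).bddAbove ht le_rfl)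
  rintro _ ⟨g, rfl⟩
  exact Real.iSup_le (fun _ => measureReal_symmDiff_image_mul_right_le hμs g) (by positivity)

theorem norm_integral_cond_comp_mul_right_sub_le {s : Set G} (hs : MeasurableSet s)
    (hμs : μ s ≠ ∞) {φ : G → E} (hφ : AEStronglyMeasurable φ μ) {C : ℝ} (hC : ∀ g, ‖φ g‖ ≤ C)
    (h : G) :
    ‖∫ g, φ (g * h) ∂μ[|s] - ∫ g, φ g ∂μ[|s]‖
      ≤ C * (μ.real (symmDiff s ((· * h) '' s)) / μ.real s) := by
  have hsh : MeasurableSet ((· * h) '' s) := by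
    rw [Set.image_mul_right]; exact measurable_mul_const h⁻¹ hs
  rw [integral_cond, integral_cond, ← smul_sub,
    ← (measurePreserving_mul_right μ h).setIntegral_image_emb
      (MeasurableEquiv.mulRight h).measurableEmbedding,
    norm_smul, Real.norm_of_nonneg (by positivity), symmDiff_comm]
  calc (μ.real s)⁻¹ * ‖∫ g in (· * h) '' s, φ g ∂μ - ∫ g in s, φ g ∂μ‖
      ≤ (μ.real s)⁻¹ * (C * μ.real (symmDiff ((· * h) '' s) s)) := by
        gcongr
        exact norm_setIntegral_sub_setIntegral_le hsh hs (by rwa [measure_image_mul_right])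
          hμs hφ hC
    _ = C * (μ.real (symmDiff ((· * h) '' s) s) / μ.real s) := by ring

end Translation

section VanDerCorput

variable {G H : Type*} [Group G] [MeasurableSpace G] [MeasurableMul₂ G]
  {μ : Measure G} [μ.IsMulRightInvariant]
  [NormedAddCommGroup H] [InnerProductSpace ℝ H]
  {Λ : ℕ → Set G} {f : G → H} {C : ℝ}

theorem tendsto_measureReal_symmDiff_div_of_mem (hfin : ∀ n, μ (Λ n) < ⊤) {t : Set G}
    (hUnif : Tendsto (fun n => (⨆ g ∈ t, μ.real (symmDiff (Λ n) ((· * g) '' Λ n))) / μ.real (Λ n))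
      atTop (𝓝 0))
    {h : G} (hh : h ∈ t) :
    Tendsto (fun n => μ.real (symmDiff (Λ n) ((· * h) '' Λ n)) / μ.real (Λ n)) atTop (𝓝 0) :=
  squeeze_zero (fun _ => by positivity)
    (fun n => div_le_div_of_nonneg_right
      (measureReal_symmDiff_image_mul_right_le_iSup (hfin n).ne hh) measureReal_nonneg) hUnif

theorem tendsto_integral_cond_inner_mul (hΛm : ∀ n, MeasurableSet (Λ n))
    (hfin : ∀ n, μ (Λ n) < ⊤) (hfs : StronglyMeasurable f) (hC : ∀ g, ‖f g‖ ≤ C) {γ : G → ℝ}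
    (hγ : ∀ h, Tendsto (fun n => ∫ g, ⟪f g, f (g * h)⟫ ∂μ[|Λ n]) atTop (𝓝 (γ h))) {h₁ : G}
    (hh₁ : Tendsto (fun n => μ.real (symmDiff (Λ n) ((· * h₁) '' Λ n)) / μ.real (Λ n)) atTop (𝓝 0))
    (h₂ : G) :
    Tendsto (fun n => ∫ g, ⟪f (g * h₁), f (g * h₂)⟫ ∂μ[|Λ n]) atTop (𝓝 (γ (h₁⁻¹ * h₂))) := by
  set φ : G → ℝ := fun g => ⟪f g, f (g * (h₁⁻¹ * h₂))⟫
  have hφ : StronglyMeasurable φ := hfs.inner (hfs.comp_measurable (measurable_mul_const _))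
  have hshift : ∀ g, ⟪f (g * h₁), f (g * h₂)⟫ = φ (g * h₁) := fun g => by simp [φ, mul_assoc]
  simp_rw [hshift]
  refine (hγ _).congr_dist (squeeze_zero (fun _ => dist_nonneg) (fun n => ?_)
    (by simpa only [mul_zero] using hh₁.const_mul (C * C)))
  rw [dist_comm, dist_eq_norm]
  exact norm_integral_cond_comp_mul_right_sub_le (hΛm n) (hfin n).ne hφ.aestronglyMeasurable
    (fun g => norm_inner_le_of_forall_norm_le hC _ _) h₁

theorem tendsto_integral_correlation (hΛm : ∀ n, MeasurableSet (Λ n))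
    (hfin : ∀ n, μ (Λ n) < ⊤) (hfs : StronglyMeasurable f) (hC : ∀ g, ‖f g‖ ≤ C) {γ : G → ℝ}
    (hγ : ∀ h, Tendsto (fun n => ∫ g, ⟪f g, f (g * h)⟫ ∂μ[|Λ n]) atTop (𝓝 (γ h))) {m : ℕ}
    (hUnif : Tendsto
      (fun n => (⨆ g ∈ Λ m, μ.real (symmDiff (Λ n) ((· * g) '' Λ n))) / μ.real (Λ n)) atTop (𝓝 0)) :
    Tendsto (fun n => ∫ p, ∫ g, ⟪f (g * p.1), f (g * p.2)⟫ ∂μ[|Λ n] ∂(μ[|Λ m]).prod μ[|Λ m])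
      atTop (𝓝 (∫ h₂, ∫ h₁, γ (h₁⁻¹ * h₂) ∂μ[|Λ m] ∂μ[|Λ m])) := by
  have hlim : ∀ᵐ p ∂(μ[|Λ m]).prod μ[|Λ m], Tendsto
      (fun n => ∫ g, ⟪f (g * p.1), f (g * p.2)⟫ ∂μ[|Λ n]) atTop (𝓝 (γ (p.1⁻¹ * p.2))) := by
    filter_upwards [Measure.quasiMeasurePreserving_fst.ae (ae_cond_mem (hΛm m))] with p hp
    exact tendsto_integral_cond_inner_mul hΛm hfin hfs hC hγ
      (tendsto_measureReal_symmDiff_div_of_mem hfin hUnif hp) p.2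
  have hmeas : ∀ n, StronglyMeasurable
      fun p : G × G => ∫ g, ⟪f (g * p.1), f (g * p.2)⟫ ∂μ[|Λ n] := fun n =>
    StronglyMeasurable.integral_prod_right'
      (f := fun q : (G × G) × G => ⟪f (q.2 * q.1.1), f (q.2 * q.1.2)⟫)
      ((hfs.comp_measurable (measurable_snd.mul measurable_fst.fst)).inner
        (hfs.comp_measurable (measurable_snd.mul measurable_fst.snd)))
  have hbound : ∀ n (p : G × G), ‖∫ g, ⟪f (g * p.1), f (g * p.2)⟫ ∂μ[|Λ n]‖ ≤ C * C := fun n p =>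
    norm_integral_le_of_forall_norm_le _ (mul_self_nonneg C)
      (fun g => norm_inner_le_of_forall_norm_le hC _ _)
  have hint : Integrable (fun p : G × G => γ (p.1⁻¹ * p.2)) ((μ[|Λ m]).prod μ[|Λ m]) :=
    .of_bound
      (aestronglyMeasurable_of_tendsto_ae atTop (fun n => (hmeas n).aestronglyMeasurable) hlim)
      (C * C) (hlim.mono fun p hp => le_of_tendsto hp.norm (.of_forall fun n => hbound n p))
  have hlimit : ∫ p, γ (p.1⁻¹ * p.2) ∂(μ[|Λ m]).prod μ[|Λ m]
      = ∫ h₂, ∫ h₁, γ (h₁⁻¹ * h₂) ∂μ[|Λ m] ∂μ[|Λ m] := integral_prod_symm _ hint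
  rw [← hlimit]
  exact tendsto_integral_of_dominated_convergence (fun _ => C * C)
    (fun n => (hmeas n).aestronglyMeasurable) (integrable_const _)
    (fun n => ae_of_all _ (hbound n)) hlim

theorem norm_integral_cond_sub_integral_integral_le [CompleteSpace H]
    (hΛm : ∀ n, MeasurableSet (Λ n)) (hfin : ∀ n, μ (Λ n) < ⊤) (hfs : StronglyMeasurable f)
    (hC : ∀ g, ‖f g‖ ≤ C) {m : ℕ}
    (hm : μ (Λ m) ≠ 0) (n : ℕ) :
    ‖∫ g, f g ∂μ[|Λ n] - ∫ h, ∫ g, f (g * h) ∂μ[|Λ n] ∂μ[|Λ m]‖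
      ≤ C * ((⨆ h ∈ Λ m, μ.real (symmDiff (Λ n) ((· * h) '' Λ n))) / μ.real (Λ n)) := by
  have := cond_isProbabilityMeasure_of_finite hm (hfin m).ne
  have hC0 : 0 ≤ C := (norm_nonneg _).trans (hC 1)
  have hT : StronglyMeasurable fun h => ∫ g, f (g * h) ∂μ[|Λ n] :=
    StronglyMeasurable.integral_prod_right' (f := fun q : G × G => f (q.2 * q.1))
      (hfs.comp_measurable (measurable_snd.mul measurable_fst))
  refine norm_sub_integral_le _ (.of_bound hT.aestronglyMeasurable C
    (ae_of_all _ fun h => norm_integral_le_of_forall_norm_le _ hC0 fun g => hC _)) _ ?_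
  filter_upwards [ae_cond_mem (hΛm m)] with h hh
  rw [norm_sub_rev]
  refine (norm_integral_cond_comp_mul_right_sub_le (hΛm n) (hfin n).ne hfs.aestronglyMeasurable
    hC h).trans ?_
  gcongr
  exact measureReal_symmDiff_image_mul_right_le_iSup (hfin n).ne hh

theorem eventually_norm_integral_cond_lt [CompleteSpace H]
    (hΛm : ∀ n, MeasurableSet (Λ n)) (hfin : ∀ n, μ (Λ n) < ⊤) (hfs : StronglyMeasurable f)
    (hC : ∀ g, ‖f g‖ ≤ C) {γ : G → ℝ}
    (hγ : ∀ h, Tendsto (fun n => ∫ g, ⟪f g, f (g * h)⟫ ∂μ[|Λ n]) atTop (𝓝 (γ h))) {m : ℕ}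
    (hm : μ (Λ m) ≠ 0)
    (hUnif : Tendsto
      (fun n => (⨆ g ∈ Λ m, μ.real (symmDiff (Λ n) ((· * g) '' Λ n))) / μ.real (Λ n)) atTop (𝓝 0))
    {δ : ℝ} (hδ : 0 < δ) (hγm : ∫ h₂, ∫ h₁, γ (h₁⁻¹ * h₂) ∂μ[|Λ m] ∂μ[|Λ m] < δ ^ 2) :
    ∀ᶠ n in atTop, ‖∫ g, f g ∂μ[|Λ n]‖ < 2 * δ := by
  set B : ℕ → H := fun n => ∫ h, ∫ g, f (g * h) ∂μ[|Λ n] ∂μ[|Λ m]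
  have hAB : ∀ᶠ n in atTop, ‖∫ g, f g ∂μ[|Λ n] - B n‖ < δ := by
    have hCU := hUnif.const_mul C
    rw [mul_zero] at hCU
    filter_upwards [hCU.eventually (gt_mem_nhds hδ)] with n hn
    exact (norm_integral_cond_sub_integral_integral_le hΛm hfin hfs hC hm n).trans_lt hn
  have hB : ∀ᶠ n in atTop, ‖B n‖ ^ 2 < δ ^ 2 := by
    filter_upwards [(tendsto_integral_correlation hΛm hfin hfs hC hγ hUnif).eventually
      (gt_mem_nhds hγm)] with n hn
    exact (sq_norm_integral_integral_le (F := fun g h => f (g * h)) _ _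
      (hfs.comp_measurable measurable_mul) (fun _ _ => hC _)).trans_lt hn
  filter_upwards [hAB, hB] with n hAB hB
  calc ‖∫ g, f g ∂μ[|Λ n]‖ ≤ ‖B n‖ + ‖∫ g, f g ∂μ[|Λ n] - B n‖ := norm_le_insert' _ _
    _ < δ + δ := add_lt_add ((pow_lt_pow_iff_left₀ (norm_nonneg _) hδ.le two_ne_zero).1 hB) hAB
    _ = 2 * δ := by ring

end VanDerCorput

theorem van_der_corput_general
    {G : Type*} [TopologicalSpace G] [Group G] [IsTopologicalGroup G]
    [SecondCountableTopology G] [MeasurableSpace G] [BorelSpace G]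
    (μ : Measure G) [μ.IsMulRightInvariant]
    {H : Type*} [NormedAddCommGroup H] [InnerProductSpace ℝ H] [CompleteSpace H]
    (Λ : ℕ → Set G) (hΛm : ∀ n, MeasurableSet (Λ n))
    (hfin : ∀ n, μ (Λ n) < ⊤)
    (hUnif : ∀ m : ℕ,
      Tendsto (fun n => (⨆ g ∈ Λ m, (μ (symmDiff (Λ n) ((· * g) '' Λ n))).toReal)
          / (μ (Λ n)).toReal)
        atTop (𝓝 0))
    (f : G → H) (C : ℝ) (hC : ∀ g, ‖f g‖ ≤ C)
    (hfs : StronglyMeasurable f)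
    (γ : G → ℝ)
    (hγ : ∀ h : G,
      Tendsto (fun n => (μ (Λ n)).toReal⁻¹ * ∫ g in Λ n, ⟪f g, f (g * h)⟫ ∂μ)
        atTop (𝓝 (γ h)))
    (hγavg : Tendsto
      (fun m => ((μ (Λ m)).toReal ^ 2)⁻¹ *
        ∫ h₂ in Λ m, ∫ h₁ in Λ m, γ (h₁⁻¹ * h₂) ∂μ ∂μ)
      atTop (𝓝 0)) :
    Tendsto (fun n => (μ (Λ n)).toReal⁻¹ • ∫ g in Λ n, f g ∂μ) atTop (𝓝 (0 : H)) := by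
  simp only [← measureReal_def] at hUnif hγ hγavg ⊢
  replace hγ : ∀ h, Tendsto (fun n => ∫ g, ⟪f g, f (g * h)⟫ ∂μ[|Λ n]) atTop (𝓝 (γ h)) := by
    simpa only [integral_cond, smul_eq_mul] using hγ
  replace hγavg : Tendsto (fun m => ∫ h₂, ∫ h₁, γ (h₁⁻¹ * h₂) ∂μ[|Λ m] ∂μ[|Λ m]) atTop (𝓝 0) := by
    simpa only [integral_cond, smul_eq_mul, integral_const_mul, sq, mul_inv, mul_assoc] using hγavg
  simp only [← integral_cond]
  refine NormedAddGroup.tendsto_nhds_zero.2 fun ε hε => ?_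
  by_cases hΛ : ∃ᶠ m in atTop, μ (Λ m) ≠ 0
  · obtain ⟨m, hm, hγm⟩ := (hΛ.and_eventually
      (hγavg.eventually (gt_mem_nhds (by positivity : (0 : ℝ) < (ε / 2) ^ 2)))).exists
    filter_upwards [eventually_norm_integral_cond_lt hΛm hfin hfs hC hγ hm (hUnif m)
      (half_pos hε) hγm] with n hn
    linarith
  · filter_upwards [not_frequently.1 hΛ] with n hn
    simp [cond_eq_zero_of_meas_eq_zero (not_not.1 hn), hε]

/-- Theorem 2.7′: van der Corput lemma for a uniformly space-filling sequence
`Λₙ` in a Borel subsemigroup `K` of a second countable topological group with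
right invariant measure: if the correlation averages of a bounded weakly
measurable `f : G → H` converge to `γ h`, and the normalized double averages of
`γ(h₁⁻¹h₂)` tend to `0`, then the normalized averages of `f` tend to `0`. -/
theorem van_der_corput
    {G : Type*} [TopologicalSpace G] [Group G] [IsTopologicalGroup G]
    [SecondCountableTopology G] [MeasurableSpace G] [BorelSpace G]
    (μ : Measure G) [μ.IsMulRightInvariant]
    {H : Type*} [NormedAddCommGroup H] [InnerProductSpace ℝ H] [CompleteSpace H]
    (K : Set G) (hK : MeasurableSet K) (hKmul : ∀ a ∈ K, ∀ b ∈ K, a * b ∈ K)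
    (Λ : ℕ → Set G) (hΛK : ∀ n, Λ n ⊆ K) (hΛm : ∀ n, MeasurableSet (Λ n))
    (hfin : ∀ n, μ (Λ n) < ⊤) (hpos : ∀ᶠ n in atTop, 0 < μ (Λ n))
    (hFolner : ∀ g ∈ K,
      Tendsto (fun n => (μ (symmDiff (Λ n) ((· * g) '' Λ n))).toReal / (μ (Λ n)).toReal)
        atTop (𝓝 0))
    (hUnif : ∀ m : ℕ,
      Tendsto (fun n => (⨆ g ∈ Λ m, (μ (symmDiff (Λ n) ((· * g) '' Λ n))).toReal)
          / (μ (Λ n)).toReal)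
        atTop (𝓝 0))
    (f : G → H) (C : ℝ) (hC : ∀ g, ‖f g‖ ≤ C)
    (hfw : ∀ x : H, Measurable fun g => ⟪f g, x⟫)
    (hfs : StronglyMeasurable f)
    (hF : Measurable fun p : G × G => ⟪f p.1, f p.2⟫)
    (γ : G → ℝ)
    (hγ : ∀ h : G,
      Tendsto (fun n => (μ (Λ n)).toReal⁻¹ * ∫ g in Λ n, ⟪f g, f (g * h)⟫ ∂μ)
        atTop (𝓝 (γ h)))
    (hγavg : Tendsto
      (fun m => ((μ (Λ m)).toReal ^ 2)⁻¹ *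
        ∫ h₂ in Λ m, ∫ h₁ in Λ m, γ (h₁⁻¹ * h₂) ∂μ ∂μ)
      atTop (𝓝 0)) :
    Tendsto (fun n => (μ (Λ n)).toReal⁻¹ • ∫ g in Λ n, f g ∂μ) atTop (𝓝 (0 : H)) :=
  van_der_corput_general μ Λ hΛm hfin hUnif f C hC hfs γ hγ hγavg
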